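/- arXiv:2507.20898 — 2 statements merged into one kernel-verified Lean document; each statement's English description precedes it below -/
import Mathlib

section
/- For every ρ̄ ∈ (0,1) and every a > 0 there exists a constant C > 0 such that ρ̄ⁿ Σ_{k=1}^n (1/k!) C(n−1,k−1) a^k ≤ C (ρ̄(2−ρ̄))ⁿ for all n ≥ 1, where C(n,k) denotes the binomial coefficient; note that ρ̄(2−ρ̄) = 1 − (1−ρ̄)² ∈ (0,1). -/
open scoped BigOperators Classical

noncomputable section

namespace NLLGame

/-- Map the `i`-th off-diagonal index to the corresponding state `y ≠ x`
(the paper's convention: `a_y` for `y < x` and `a_{y-1}` for `y > x`). -/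
def idxToState {d : ℕ} (x : Fin d) (i : Fin (d - 1)) : Fin d :=
  if h : (i : ℕ) < (x : ℕ) then ⟨(i : ℕ), Nat.lt_trans h x.isLt⟩
  else ⟨(i : ℕ) + 1, by have := i.isLt; omega⟩

/-- The discretized simplex `Σ^{d-1}_N`, represented by the vector of counts
`n_x = N μ_x` of the `N` untagged players across the `d` states. -/
def Simplex (d N : ℕ) : Type := {f : Fin d → Fin (N + 1) // ∑ x, (f x : ℕ) = N}

instance (d N : ℕ) : Fintype (Simplex d N) := by unfold Simplex; infer_instance
instance (d N : ℕ) : DecidableEq (Simplex d N) := by unfold Simplex; infer_instance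

/-- The state space `𝒮 = 𝒳 × Σ^{d-1}_N`. -/
abbrev State (d N : ℕ) := Fin d × Simplex d N

/-- `shift μ y z = μ + e_{y,z} = μ + (e_y - e_z)/N` in the count representation;
it defaults to `μ` when the shifted measure leaves the simplex (such terms are
multiplied by a vanishing coefficient in the generators below). -/
def shift {d N : ℕ} (μ : Simplex d N) (y z : Fin d) : Simplex d N :=
  if h : ∃ σ : Simplex d N, ∀ w,
      (σ.1 w : ℕ) + (if w = z then 1 else 0) = (μ.1 w : ℕ) + (if w = y then 1 else 0)
  then h.choose else μ

/-- Rate vectors `a ∈ ℝ^{d-1}`. -/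
abbrev Vec (d : ℕ) := Fin (d - 1) → ℝ

def sqnorm {k : ℕ} (a : Fin k → ℝ) : ℝ := ∑ i, a i ^ 2

def norm2 {k : ℕ} (a : Fin k → ℝ) : ℝ := Real.sqrt (sqnorm a)

/-- Feedback controls. -/
abbrev Ctrl (d N : ℕ) := ℝ → State d N → Vec d

/-- Admissible controls `𝒜`: nonnegative and Lipschitz (in time) on `[0,T]`. -/
def Admissible {d N : ℕ} (T : ℝ) (α : Ctrl d N) : Prop :=
  (∀ t ∈ Set.Icc (0:ℝ) T, ∀ s i, 0 ≤ α t s i) ∧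
  ∃ K : NNReal, ∀ s i, LipschitzOnWith K (fun t => α t s i) (Set.Icc (0:ℝ) T)

variable {d N : ℕ}

/-- First difference vector `Δ_x φ = (φ(y) - φ(x))_{y ≠ x}`. -/
def delta (x : Fin d) (φ : Fin d → ℝ) : Vec d :=
  fun i => φ (idxToState x i) - φ x

/-- `γ`-strong convexity of the running cost in the control variable. -/
def StronglyConvex (ℓ : State d N → Vec d → ℝ) (γ : ℝ) : Prop :=
  ∀ s : State d N, ∀ a a' : Vec d, (∀ i, 0 ≤ a i) → (∀ i, 0 ≤ a' i) →
    ∀ τ ∈ Set.Icc (0:ℝ) 1,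
      γ * τ * (1 - τ) * sqnorm (fun i => a' i - a i) ≤
        τ * ℓ s a' + (1 - τ) * ℓ s a - ℓ s (fun i => τ * a' i + (1 - τ) * a i)

/-- The Hamiltonian `H(x,μ,p)`. -/
def ham (lam0 lam1 : State d N → Vec d) (ℓ : State d N → Vec d → ℝ)
    (s : State d N) (p : Vec d) : ℝ :=
  sInf ((fun a => ℓ s a + ∑ i, (lam0 s i + lam1 s i * a i) * p i) ''
    {a : Vec d | ∀ i, 0 ≤ a i})

/-- `a` is the minimizer defining `â(x,μ,p)`. -/
def IsArgmin (lam1 : State d N → Vec d) (ℓ : State d N → Vec d → ℝ)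
    (s : State d N) (p : Vec d) (a : Vec d) : Prop :=
  (∀ i, 0 ≤ a i) ∧ ∀ b : Vec d, (∀ i, 0 ≤ b i) →
    ℓ s a + ∑ i, lam1 s i * a i * p i ≤ ℓ s b + ∑ i, lam1 s i * b i * p i

/-- The minimizer `â(x,μ,p)` (via choice; well defined under strong convexity). -/
def hatAlpha (lam1 : State d N → Vec d) (ℓ : State d N → Vec d → ℝ)
    (s : State d N) (p : Vec d) : Vec d :=
  if h : ∃ a, IsArgmin lam1 ℓ s p a then h.choose else 0

/-- Mean-field part `𝓛^β_μ` of the generator. -/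
def genMu (lam0 lam1 : State d N → Vec d) (β : Ctrl d N)
    (ψ : ℝ → State d N → ℝ) (t : ℝ) (s : State d N) : ℝ :=
  ∑ z : Fin d, ∑ i : Fin (d - 1),
    ((s.2.1 z : ℕ) : ℝ) *
      ((lam0 (z, shift s.2 s.1 z) i + lam1 (z, shift s.2 s.1 z) i * β t (z, shift s.2 s.1 z) i) *
        (ψ t (s.1, shift s.2 (idxToState z i) z) - ψ t s))

/-- Tagged-player part `𝓛^γ_x` of the generator. -/
def genX (lam0 lam1 : State d N → Vec d) (γc : Ctrl d N)
    (ψ : ℝ → State d N → ℝ) (t : ℝ) (s : State d N) : ℝ :=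
  ∑ i, (lam0 s i + lam1 s i * γc t s i) * (ψ t (idxToState s.1 i, s.2) - ψ t s)

/-- `v` is a C¹ solution of the dynamic programming equation `HJB(β)`. -/
def IsHJBSol (T : ℝ) (lam0 lam1 : State d N → Vec d) (ℓ : State d N → Vec d → ℝ)
    (g : State d N → ℝ) (β : Ctrl d N) (v : ℝ → State d N → ℝ) : Prop :=
  (∀ s, v T s = g s) ∧
  ∀ t ∈ Set.Icc (0:ℝ) T, ∀ s,
    HasDerivWithinAt (fun u => v u s)
      (-(ham lam0 lam1 ℓ s (delta s.1 fun y => v t (y, s.2)) + genMu lam0 lam1 β v t s))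
      (Set.Icc (0:ℝ) T) t

/-- `α` is the best response associated with the value function `v`, i.e.
`α(t,x,μ) = â(x,μ,Δ_x v(t,·,μ))` on `[0,T] × 𝒮`. -/
def IsBR (T : ℝ) (lam1 : State d N → Vec d) (ℓ : State d N → Vec d → ℝ)
    (v : ℝ → State d N → ℝ) (α : Ctrl d N) : Prop :=
  ∀ t ∈ Set.Icc (0:ℝ) T, ∀ s, IsArgmin lam1 ℓ s (delta s.1 fun y => v t (y, s.2)) (α t s)

/-- `v` is a C¹ solution of the `N`-NLL system. -/
def IsNLLSol (T : ℝ) (lam0 lam1 : State d N → Vec d) (ℓ : State d N → Vec d → ℝ)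
    (g : State d N → ℝ) (v : ℝ → State d N → ℝ) : Prop :=
  (∀ s, v T s = g s) ∧
  ∃ α : Ctrl d N, IsBR T lam1 ℓ v α ∧
    ∀ t ∈ Set.Icc (0:ℝ) T, ∀ s,
      HasDerivWithinAt (fun u => v u s)
        (-(ham lam0 lam1 ℓ s (delta s.1 fun y => v t (y, s.2)) + genMu lam0 lam1 α v t s))
        (Set.Icc (0:ℝ) T) t

/-- Markov perfect equilibrium: `α ∈ 𝒜` with `α*(α) = α`. -/
def IsMPE (T : ℝ) (lam0 lam1 : State d N → Vec d) (ℓ : State d N → Vec d → ℝ)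
    (g : State d N → ℝ) (α : Ctrl d N) : Prop :=
  Admissible T α ∧
  ∃ v : ℝ → State d N → ℝ, IsHJBSol T lam0 lam1 ℓ g α v ∧ IsBR T lam1 ℓ v α

/-- `‖λ¹‖_∞`. -/
def lamInf (lam1 : State d N → Vec d) : ℝ :=
  sSup (Set.range fun p : State d N × Fin (d - 1) => lam1 p.1 p.2)

/-- `c_v = max_{(x,μ)} (T ℓ(x,μ,0) + g(x,μ))`. -/
def cV (T : ℝ) (ℓ : State d N → Vec d → ℝ) (g : State d N → ℝ) : ℝ :=
  sSup (Set.range fun s : State d N => T * ℓ s 0 + g s)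

/-- `c_a = max_{(x,μ)} |â(x,μ,0)|₂ + 2 √(d-1) ‖λ¹‖_∞ c_v / γ`. -/
def cA (T : ℝ) (lam1 : State d N → Vec d) (ℓ : State d N → Vec d → ℝ)
    (g : State d N → ℝ) (γ : ℝ) : ℝ :=
  sSup (Set.range fun s : State d N => norm2 (hatAlpha lam1 ℓ s 0)) +
    2 * Real.sqrt ((d : ℝ) - 1) * lamInf lam1 * cV T ℓ g / γ

/-- `|α(t)|₂²` for a (vector-valued) control. -/
def ctrlNormSq (α : Ctrl d N) (t : ℝ) : ℝ := ∑ s : State d N, ∑ i, α t s i ^ 2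

/-- `|ψ(t)|₂²` for a (real-valued) function on `[0,T] × 𝒮`. -/
def valNormSq (v : ℝ → State d N → ℝ) (t : ℝ) : ℝ := ∑ s : State d N, v t s ^ 2

/-- `‖α‖ = max_{t ∈ [0,T]} |α(t)|₂`. -/
def ctrlSup (T : ℝ) (α : Ctrl d N) : ℝ :=
  sSup ((fun t => Real.sqrt (ctrlNormSq α t)) '' Set.Icc (0:ℝ) T)

/-- `‖v‖ = max_{t ∈ [0,T]} |v(t)|₂`. -/
def valSup (T : ℝ) (v : ℝ → State d N → ℝ) : ℝ :=
  sSup ((fun t => Real.sqrt (valNormSq v t)) '' Set.Icc (0:ℝ) T)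

/-- The restricted class `𝒜*` of admissible controls bounded by `c_a`. -/
def AdmStar (T : ℝ) (lam1 : State d N → Vec d) (ℓ : State d N → Vec d → ℝ)
    (g : State d N → ℝ) (γ : ℝ) (α : Ctrl d N) : Prop :=
  Admissible T α ∧ ∀ t ∈ Set.Icc (0:ℝ) T, Real.sqrt (ctrlNormSq α t) ≤ cA T lam1 ℓ g γ

/-- `j = J^{γ;β}` : the cost of the tagged player using `γc` against `β`. -/
def IsCostSol (T : ℝ) (lam0 lam1 : State d N → Vec d) (ℓ : State d N → Vec d → ℝ)
    (g : State d N → ℝ) (γc β : Ctrl d N) (j : ℝ → State d N → ℝ) : Prop :=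
  (∀ s, j T s = g s) ∧
  ∀ t ∈ Set.Icc (0:ℝ) T, ∀ s,
    HasDerivWithinAt (fun u => j u s)
      (-(ℓ s (γc t s) + genX lam0 lam1 γc j t s + genMu lam0 lam1 β j t s))
      (Set.Icc (0:ℝ) T) t

/-- `γs` is an `ε`-Markov perfect equilibrium. -/
def IsEpsMPE (T : ℝ) (lam0 lam1 : State d N → Vec d) (ℓ : State d N → Vec d → ℝ)
    (g : State d N → ℝ) (eps : ℝ) (γs : Ctrl d N) : Prop :=
  Admissible T γs ∧
  ∀ js, IsCostSol T lam0 lam1 ℓ g γs γs js →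
    ∀ γc, Admissible T γc → ∀ j, IsCostSol T lam0 lam1 ℓ g γc γs j →
      ∀ t ∈ Set.Icc (0:ℝ) T, ∀ s, js t s ≤ j t s + eps

theorem stmt12_geometric_bound (ρ a : ℝ) (hρ : ρ ∈ Set.Ioo (0:ℝ) 1) (ha : 0 < a) :
    ∃ C : ℝ, 0 < C ∧ ∀ n : ℕ, 1 ≤ n →
      ρ ^ n * ∑ k ∈ Finset.Icc 1 n,
          (1 / (k.factorial : ℝ)) * ((n - 1).choose (k - 1) : ℝ) * a ^ k ≤
        C * (ρ * (2 - ρ)) ^ n := by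
  obtain ⟨hρ0, hρ1⟩ := hρ
  set ε : ℝ := Real.log (2 - ρ) with hεdef
  have h2ρ : (1:ℝ) < 2 - ρ := by linarith
  have hε : 0 < ε := Real.log_pos h2ρ
  refine ⟨a * Real.exp (a / ε), by positivity, fun n hn => ?_⟩
  set s : ℝ := Real.sqrt (n * a) with hsdef
  have hna : (0:ℝ) ≤ n * a := by positivity
  have hs2 : s ^ 2 = n * a := Real.sq_sqrt hna
  -- Step 1: bound the sum by a * exp(2s)
  have hsum : ∑ k ∈ Finset.Icc 1 n,
      (1 / (k.factorial : ℝ)) * ((n - 1).choose (k - 1) : ℝ) * a ^ k ≤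
      a * Real.exp (2 * s) := by
    have hre : Finset.Icc 1 n = Finset.Ico 1 (n + 1) := by
      rw [Finset.Ico_add_one_right_eq_Icc]
    rw [hre, Finset.sum_Ico_eq_sum_range]
    simp only [Nat.add_sub_cancel]
    have hterm : ∀ j ∈ Finset.range n,
        (1 / ((1 + j).factorial : ℝ)) * ((n - 1).choose (1 + j - 1) : ℝ) * a ^ (1 + j) ≤
        a * (s ^ j / (j.factorial : ℝ)) ^ 2 := by
      intro j hj
      have hjn : j ≤ n - 1 := by
        have := Finset.mem_range.mp hj; omega
      have h1 : ((n - 1).choose j : ℝ) * (j.factorial : ℝ) ≤ (n : ℝ) ^ j := by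
        have : (n-1).choose j * j.factorial ≤ n ^ j := by
          calc (n-1).choose j * j.factorial = (n-1).descFactorial j := by
                rw [Nat.descFactorial_eq_factorial_mul_choose]; ring
            _ ≤ (n-1) ^ j := Nat.descFactorial_le_pow _ _
            _ ≤ n ^ j := Nat.pow_le_pow_left (by omega) _
        exact_mod_cast this
      have hjf : (0:ℝ) < (j.factorial : ℝ) := by exact_mod_cast j.factorial_pos
      have hjf1 : (0:ℝ) < ((1+j).factorial : ℝ) := by exact_mod_cast (1+j).factorial_pos
      have hff : (j.factorial : ℝ) ≤ ((1+j).factorial : ℝ) := by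
        exact_mod_cast Nat.factorial_le (by omega)
      have hkey : (1 / ((1 + j).factorial : ℝ)) * ((n - 1).choose (1 + j - 1) : ℝ) ≤
          (n : ℝ) ^ j / (j.factorial : ℝ) ^ 2 := by
        simp only [Nat.add_sub_cancel_left]
        rw [div_mul_eq_mul_div, one_mul, div_le_div_iff₀ hjf1 (by positivity)]
        calc ((n-1).choose j : ℝ) * (j.factorial : ℝ)^2
            = (((n-1).choose j : ℝ) * (j.factorial : ℝ)) * (j.factorial : ℝ) := by ring
          _ ≤ (n:ℝ)^j * ((1+j).factorial : ℝ) := by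
              apply mul_le_mul h1 hff (le_of_lt hjf)
              positivity
      have hpow : a ^ (1 + j) = a * a ^ j := by rw [pow_add, pow_one]
      calc (1 / ((1 + j).factorial : ℝ)) * ((n - 1).choose (1 + j - 1) : ℝ) * a ^ (1 + j)
          ≤ ((n : ℝ) ^ j / (j.factorial : ℝ) ^ 2) * a ^ (1 + j) := by
            apply mul_le_mul_of_nonneg_right hkey (by positivity)
        _ = a * (s ^ j / (j.factorial : ℝ)) ^ 2 := by
            rw [hpow, div_pow, ← pow_mul, mul_comm j 2, pow_mul, hs2, mul_pow]
            field_simp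
    calc ∑ j ∈ Finset.range n,
          (1 / ((1 + j).factorial : ℝ)) * ((n - 1).choose (1 + j - 1) : ℝ) * a ^ (1 + j)
        ≤ ∑ j ∈ Finset.range n, a * (s ^ j / (j.factorial : ℝ)) ^ 2 :=
          Finset.sum_le_sum hterm
      _ = a * ∑ j ∈ Finset.range n, (s ^ j / (j.factorial : ℝ)) ^ 2 := by
          rw [Finset.mul_sum]
      _ ≤ a * Real.exp (2 * s) := by
          apply mul_le_mul_of_nonneg_left _ (le_of_lt ha)
          calc ∑ j ∈ Finset.range n, (s ^ j / (j.factorial : ℝ)) ^ 2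
              ≤ (∑ j ∈ Finset.range n, s ^ j / (j.factorial : ℝ)) ^ 2 := by
                apply Finset.sum_sq_le_sq_sum_of_nonneg
                intro j _
                have : (0:ℝ) ≤ s := Real.sqrt_nonneg _
                positivity
            _ ≤ (Real.exp s) ^ 2 := by
                apply pow_le_pow_left₀
                · apply Finset.sum_nonneg; intro j _
                  have : (0:ℝ) ≤ s := Real.sqrt_nonneg _
                  positivity
                · exact Real.sum_le_exp_of_nonneg (Real.sqrt_nonneg _) n
            _ = Real.exp (2 * s) := by
                rw [← Real.exp_nat_mul]; norm_num [mul_comm]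
  -- Step 2: 2s ≤ ε n + a/ε
  have hAM : 2 * s ≤ ε * n + a / ε := by
    have hu : (0:ℝ) ≤ ε * n := by positivity
    have hv : (0:ℝ) ≤ a / ε := by positivity
    have h1 : Real.sqrt (ε * n) * Real.sqrt (a / ε) = s := by
      rw [← Real.sqrt_mul hu, hsdef]
      congr 1
      field_simp
    calc 2 * s = 2 * Real.sqrt (ε * n) * Real.sqrt (a / ε) := by rw [mul_assoc, h1]
      _ ≤ Real.sqrt (ε * n) ^ 2 + Real.sqrt (a / ε) ^ 2 := two_mul_le_add_sq _ _
      _ = ε * n + a / ε := by rw [Real.sq_sqrt hu, Real.sq_sqrt hv]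
  have hexp : Real.exp (2 * s) ≤ Real.exp (a / ε) * (2 - ρ) ^ n := by
    calc Real.exp (2 * s) ≤ Real.exp (ε * n + a / ε) := Real.exp_le_exp.mpr hAM
      _ = Real.exp (a / ε) * (2 - ρ) ^ n := by
        rw [Real.exp_add, mul_comm ε (n:ℝ), Real.exp_nat_mul, Real.exp_log (by linarith), mul_comm]
  -- combine
  have hρn : (0:ℝ) < ρ ^ n := by positivity
  calc ρ ^ n * ∑ k ∈ Finset.Icc 1 n,
        (1 / (k.factorial : ℝ)) * ((n - 1).choose (k - 1) : ℝ) * a ^ k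
      ≤ ρ ^ n * (a * Real.exp (2 * s)) := by
        exact mul_le_mul_of_nonneg_left hsum (le_of_lt hρn)
    _ ≤ ρ ^ n * (a * (Real.exp (a / ε) * (2 - ρ) ^ n)) := by
        apply mul_le_mul_of_nonneg_left _ (le_of_lt hρn)
        exact mul_le_mul_of_nonneg_left hexp (le_of_lt ha)
    _ = a * Real.exp (a / ε) * (ρ * (2 - ρ)) ^ n := by
        rw [mul_pow]; ring

end NLLGame
end
end

section
/- Suppose γ_0 ≡ 0, q_n(t) ≤ c* ∫_t^T γ_{n−1}(s) ds for all n ≥ 1 and t ∈ [0,T], and γ_n(t) ≤ ρ γ_{n−1}(t) + ĉ (q_n(t) + ε_n²) for all n ≥ 1 and t ∈ [0,T]. Then, setting c₊ = c* ĉ, for all n ≥ 2 and t ∈ [0,T]: γ_{n−1}(t) ≤ ĉ Σ_{k=1}^{n−1} ε_{n−k}² Σ_{j=1}^k C(k−1,j−1) ρ^{k−j} c₊^{j−1} (T−t)^{j−1}/(j−1)! and q_n(t) ≤ Σ_{k=1}^{n−1} ε_{n−k}² Σ_{j=1}^k C(k−1,j−1) ρ^{k−j} c₊^{j} (T−t)^{j}/j!,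 where C(k,j) denotes the binomial coefficient. -/
open scoped BigOperators Classical

noncomputable section

namespace NLLGame

variable {d N : ℕ}

def bfAux (ρ cp T : ℝ) (n : ℕ) (t : ℝ) : ℝ :=
  ∑ i ∈ Finset.range (n+1),
    (n.choose i : ℝ) * ρ^(n-i) * cp^i * (T-t)^i / (i.factorial : ℝ)

def qfAux (ρ cp T : ℝ) (n : ℕ) (t : ℝ) : ℝ :=
  ∑ i ∈ Finset.range (n+1),
    (n.choose i : ℝ) * ρ^(n-i) * cp^(i+1) * (T-t)^(i+1) / ((i+1).factorial : ℝ)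

lemma bfAux_zero (ρ cp T t : ℝ) : bfAux ρ cp T 0 t = 1 := by
  simp [bfAux]

lemma bfAux_continuous (ρ cp T : ℝ) (n : ℕ) : Continuous (bfAux ρ cp T n) := by
  unfold bfAux
  refine continuous_finset_sum _ fun i _ => ?_
  exact (continuous_const.mul ((continuous_const.sub continuous_id).pow i)).div_const _

lemma cp_integral_bfAux (ρ cp T : ℝ) (n : ℕ) (t : ℝ) :
    cp * ∫ s in t..T, bfAux ρ cp T n s = qfAux ρ cp T n t := by
  have h1 : ∀ i : ℕ, ∫ s in t..T, (T - s)^i = (T - t)^(i+1) / ((i:ℝ)+1) := by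
    intro i
    rw [intervalIntegral.integral_comp_sub_left (fun x => x ^ i) T, sub_self, integral_pow]
    simp
  unfold bfAux qfAux
  have hI : ∀ i ∈ Finset.range (n+1), IntervalIntegrable
      (fun s => (n.choose i : ℝ) * ρ^(n-i) * cp^i * (T-s)^i / (i.factorial : ℝ))
      MeasureTheory.volume t T := by
    intro i _
    exact ((continuous_const.mul ((continuous_const.sub continuous_id).pow
      i)).div_const _).intervalIntegrable t T
  rw [intervalIntegral.integral_finset_sum hI]
  rw [Finset.mul_sum]
  refine Finset.sum_congr rfl fun i _ => ?_
  have he : (fun s => (n.choose i : ℝ) * ρ^(n-i) * cp^i * (T-s)^i / (i.factorial : ℝ))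
      = fun s => ((n.choose i : ℝ) * ρ^(n-i) * cp^i / (i.factorial : ℝ)) * (T-s)^i :=
    funext fun s => by ring
  rw [he, intervalIntegral.integral_const_mul, h1 i]
  have hf : ((i.factorial : ℕ) : ℝ) ≠ 0 := Nat.cast_ne_zero.mpr i.factorial_pos.ne'
  have hf1 : (((i+1).factorial : ℕ) : ℝ) ≠ 0 := Nat.cast_ne_zero.mpr (i+1).factorial_pos.ne'
  have hi1 : ((i:ℝ)+1) ≠ 0 := by positivity
  rw [Nat.factorial_succ]
  push_cast
  field_simp
  ring

lemma bfAux_succ (ρ cp T : ℝ) (n : ℕ) (t : ℝ) :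
    bfAux ρ cp T (n+1) t = ρ * bfAux ρ cp T n t + qfAux ρ cp T n t := by
  unfold bfAux qfAux
  rw [Finset.sum_range_succ' (fun i =>
    ((n+1).choose i : ℝ) * ρ^(n+1-i) * cp^i * (T-t)^i / (i.factorial : ℝ)) (n+1)]
  have h0 : ((n+1).choose 0 : ℝ) * ρ^(n+1-0) * cp^0 * (T-t)^0 / ((0:ℕ).factorial : ℝ)
      = ρ^(n+1) := by simp
  rw [h0]
  have hsplit : ∀ i ∈ Finset.range (n+1),
      ((n+1).choose (i+1) : ℝ) * ρ^(n+1-(i+1)) * cp^(i+1) * (T-t)^(i+1) / ((i+1).factorial : ℝ)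
      = (n.choose i : ℝ) * ρ^(n-i) * cp^(i+1) * (T-t)^(i+1) / ((i+1).factorial : ℝ)
        + (n.choose (i+1) : ℝ) * ρ^(n-i) * cp^(i+1) * (T-t)^(i+1) / ((i+1).factorial : ℝ) := by
    intro i _
    rw [Nat.choose_succ_succ, Nat.succ_sub_succ]
    push_cast
    ring
  rw [Finset.sum_congr rfl hsplit, Finset.sum_add_distrib]
  have hρbf : ρ * ∑ i ∈ Finset.range (n+1),
        (n.choose i : ℝ) * ρ^(n-i) * cp^i * (T-t)^i / (i.factorial : ℝ)
      = (∑ i ∈ Finset.range (n+1),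
          (n.choose (i+1) : ℝ) * ρ^(n-i) * cp^(i+1) * (T-t)^(i+1) / ((i+1).factorial : ℝ))
        + ρ^(n+1) := by
    rw [Finset.sum_range_succ' (fun i =>
      (n.choose i : ℝ) * ρ^(n-i) * cp^i * (T-t)^i / (i.factorial : ℝ)) n]
    rw [Finset.sum_range_succ (fun i =>
      (n.choose (i+1) : ℝ) * ρ^(n-i) * cp^(i+1) * (T-t)^(i+1) / ((i+1).factorial : ℝ)) n]
    rw [Nat.choose_succ_self]
    simp only [Nat.cast_zero, zero_mul, zero_div, add_zero]
    rw [mul_add, Finset.mul_sum]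
    congr 1
    · refine Finset.sum_congr rfl fun i hi => ?_
      have hin : i < n := Finset.mem_range.mp hi
      have h' : n - i = (n - (i+1)) + 1 := by omega
      rw [h', pow_succ]
      ring
    · simp [pow_succ, mul_comm]
  linarith [hρbf]

lemma Icc_sum_bf (ρ cp T : ℝ) (k : ℕ) (hk : 1 ≤ k) (t : ℝ) :
    ∑ j ∈ Finset.Icc 1 k, ((k-1).choose (j-1) : ℝ) * ρ^(k-j) * cp^(j-1)
        * (T-t)^(j-1) / ((j-1).factorial : ℝ)
    = bfAux ρ cp T (k-1) t := by
  obtain ⟨m, rfl⟩ : ∃ m, k = m + 1 := ⟨k - 1, by omega⟩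
  rw [← Finset.Ico_add_one_right_eq_Icc, Finset.sum_Ico_eq_sum_range]
  unfold bfAux
  refine Finset.sum_congr (by norm_num) fun i hi => ?_
  have h1 : 1 + i - 1 = i := by omega
  have h2 : m + 1 - (1 + i) = m - i := by omega
  have h3 : m + 1 - 1 = m := by omega
  rw [h1, h2, h3]

lemma Icc_sum_qf (ρ cp T : ℝ) (k : ℕ) (hk : 1 ≤ k) (t : ℝ) :
    ∑ j ∈ Finset.Icc 1 k, ((k-1).choose (j-1) : ℝ) * ρ^(k-j) * cp^j
        * (T-t)^j / (j.factorial : ℝ)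
    = qfAux ρ cp T (k-1) t := by
  obtain ⟨m, rfl⟩ : ∃ m, k = m + 1 := ⟨k - 1, by omega⟩
  rw [← Finset.Ico_add_one_right_eq_Icc, Finset.sum_Ico_eq_sum_range]
  unfold qfAux
  refine Finset.sum_congr (by norm_num) fun i hi => ?_
  have h1 : 1 + i - 1 = i := by omega
  have h2 : m + 1 - (1 + i) = m - i := by omega
  have h3 : m + 1 - 1 = m := by omega
  have h4 : 1 + i = i + 1 := by omega
  rw [h1, h2, h3, h4]


theorem stmt15_abstract_error_recursion (T cs ch ρ : ℝ)
    (hT : 0 < T) (hcs : 0 < cs) (hch : 0 < ch) (hρ : ρ ∈ Set.Ico (0:ℝ) 1)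
    (ε : ℕ → ℝ) (hε : ∀ n, 1 ≤ n → 0 ≤ ε n)
    (q γf : ℕ → ℝ → ℝ)
    (hqc : ∀ n, 1 ≤ n → ContinuousOn (q n) (Set.Icc 0 T))
    (hqnn : ∀ n, 1 ≤ n → ∀ t ∈ Set.Icc (0:ℝ) T, 0 ≤ q n t)
    (hγc : ∀ n : ℕ, ContinuousOn (γf n) (Set.Icc 0 T))
    (hγnn : ∀ n : ℕ, ∀ t ∈ Set.Icc (0:ℝ) T, 0 ≤ γf n t)
    (hγ0 : ∀ t ∈ Set.Icc (0:ℝ) T, γf 0 t = 0)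
    (hq : ∀ n, 1 ≤ n → ∀ t ∈ Set.Icc (0:ℝ) T, q n t ≤ cs * ∫ s in t..T, γf (n - 1) s)
    (hγ : ∀ n, 1 ≤ n → ∀ t ∈ Set.Icc (0:ℝ) T,
      γf n t ≤ ρ * γf (n - 1) t + ch * (q n t + (ε n) ^ 2)) :
    ∀ n, 2 ≤ n → ∀ t ∈ Set.Icc (0:ℝ) T,
      γf (n - 1) t ≤ ch * ∑ k ∈ Finset.Icc 1 (n - 1), (ε (n - k)) ^ 2 *
          ∑ j ∈ Finset.Icc 1 k, ((k - 1).choose (j - 1) : ℝ) * ρ ^ (k - j) *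
            (cs * ch) ^ (j - 1) * (T - t) ^ (j - 1) / ((j - 1).factorial : ℝ) ∧
      q n t ≤ ∑ k ∈ Finset.Icc 1 (n - 1), (ε (n - k)) ^ 2 *
          ∑ j ∈ Finset.Icc 1 k, ((k - 1).choose (j - 1) : ℝ) * ρ ^ (k - j) *
            (cs * ch) ^ j * (T - t) ^ j / (j.factorial : ℝ) := by
  intro n hn t ht
  obtain ⟨m, rfl⟩ : ∃ m, n = m + 2 := ⟨n - 2, by omega⟩
  obtain ⟨ht0, htT⟩ := ht
  have hρ0 : 0 ≤ ρ := hρ.1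
  have hch0 : 0 ≤ ch := hch.le
  have qstep : ∀ m' : ℕ, 1 ≤ m' →
      (∀ s ∈ Set.Icc (0:ℝ) T, γf m' s ≤ ch * ∑ i ∈ Finset.range m',
        ε (m' - i) ^ 2 * bfAux ρ (cs*ch) T i s) →
      ∀ u ∈ Set.Icc (0:ℝ) T, q (m'+1) u ≤ ∑ i ∈ Finset.range m',
        ε (m' - i) ^ 2 * qfAux ρ (cs*ch) T i u := by
    intro m' hm' hG u hu
    obtain ⟨hu0, huT⟩ := hu
    have hq' := hq (m'+1) (by omega) u ⟨hu0, huT⟩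
    rw [Nat.add_sub_cancel] at hq'
    have hcont2 : Continuous (fun s => ch * ∑ i ∈ Finset.range m',
        ε (m' - i) ^ 2 * bfAux ρ (cs*ch) T i s) :=
      continuous_const.mul (continuous_finset_sum _ fun i _ =>
        continuous_const.mul (bfAux_continuous ρ (cs*ch) T i))
    have hint1 : IntervalIntegrable (γf m') MeasureTheory.volume u T := by
      apply ContinuousOn.intervalIntegrable
      apply (hγc m').mono
      rw [Set.uIcc_of_le huT]
      exact Set.Icc_subset_Icc hu0 le_rfl
    have hmono : (∫ s in u..T, γf m' s) ≤ ∫ s in u..T, ch * ∑ i ∈ Finset.range m',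
        ε (m' - i) ^ 2 * bfAux ρ (cs*ch) T i s :=
      intervalIntegral.integral_mono_on huT hint1 (hcont2.intervalIntegrable u T)
        (fun s hs => hG s ⟨le_trans hu0 hs.1, hs.2⟩)
    have hcomp : cs * ∫ s in u..T, ch * ∑ i ∈ Finset.range m',
        ε (m' - i) ^ 2 * bfAux ρ (cs*ch) T i s
        = ∑ i ∈ Finset.range m', ε (m' - i) ^ 2 * qfAux ρ (cs*ch) T i u := by
      rw [intervalIntegral.integral_const_mul]
      have hI : ∀ i ∈ Finset.range m', IntervalIntegrable
          (fun s => ε (m' - i) ^ 2 * bfAux ρ (cs*ch) T i s) MeasureTheory.volume u T :=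
        fun i _ => (continuous_const.mul (bfAux_continuous ρ (cs*ch) T i)).intervalIntegrable u T
      rw [intervalIntegral.integral_finset_sum hI, Finset.mul_sum, Finset.mul_sum]
      refine Finset.sum_congr rfl fun i _ => ?_
      rw [intervalIntegral.integral_const_mul, ← cp_integral_bfAux ρ (cs*ch) T i u]
      ring
    calc q (m'+1) u ≤ cs * ∫ s in u..T, γf m' s := hq'
      _ ≤ cs * ∫ s in u..T, ch * ∑ i ∈ Finset.range m',
          ε (m' - i) ^ 2 * bfAux ρ (cs*ch) T i s :=
            mul_le_mul_of_nonneg_left hmono hcs.le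
      _ = _ := hcomp
  have key : ∀ m' : ℕ, 1 ≤ m' → ∀ u ∈ Set.Icc (0:ℝ) T,
      γf m' u ≤ ch * ∑ i ∈ Finset.range m', ε (m' - i) ^ 2 * bfAux ρ (cs*ch) T i u := by
    intro m' hm'
    induction m', hm' using Nat.le_induction with
    | base =>
      intro u hu
      have hγ1 := hγ 1 le_rfl u hu
      have hq1 := hq 1 le_rfl u hu
      simp only [show (1:ℕ) - 1 = 0 from rfl] at hγ1 hq1
      rw [hγ0 u hu] at hγ1
      have hzero : (∫ s in u..T, γf 0 s) = 0 := by
        have heq : Set.EqOn (γf 0) 0 (Set.uIcc u T) := by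
          intro s hs
          rw [Set.uIcc_of_le hu.2] at hs
          exact hγ0 s ⟨le_trans hu.1 hs.1, hs.2⟩
        rw [intervalIntegral.integral_congr heq]
        simp
      rw [hzero, mul_zero] at hq1
      have hle : ch * (q 1 u + ε 1 ^ 2) ≤ ch * (ε 1 ^ 2) := by
        apply mul_le_mul_of_nonneg_left _ hch0
        linarith
      simp only [Finset.sum_range_one, Nat.sub_zero, bfAux_zero, mul_one]
      linarith
    | succ m' hm' ih =>
      intro u hu
      have hqm := qstep m' hm' ih u hu
      have hγm := hγ (m'+1) (by omega) u hu
      rw [Nat.add_sub_cancel] at hγm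
      have hsum : ∑ i ∈ Finset.range (m'+1), ε (m'+1 - i) ^ 2 * bfAux ρ (cs*ch) T i u
          = ρ * (∑ i ∈ Finset.range m', ε (m' - i) ^ 2 * bfAux ρ (cs*ch) T i u)
            + (∑ i ∈ Finset.range m', ε (m' - i) ^ 2 * qfAux ρ (cs*ch) T i u)
            + ε (m'+1) ^ 2 := by
        rw [Finset.sum_range_succ' (fun i => ε (m'+1 - i) ^ 2 * bfAux ρ (cs*ch) T i u) m']
        have hterm : ∀ i ∈ Finset.range m',
            ε (m'+1 - (i+1)) ^ 2 * bfAux ρ (cs*ch) T (i+1) u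
            = ρ * (ε (m' - i) ^ 2 * bfAux ρ (cs*ch) T i u)
              + ε (m' - i) ^ 2 * qfAux ρ (cs*ch) T i u := by
          intro i _
          have h' : m' + 1 - (i+1) = m' - i := by omega
          rw [h', bfAux_succ]
          ring
        rw [Finset.sum_congr rfl hterm, Finset.sum_add_distrib, Finset.mul_sum]
        simp only [Nat.sub_zero, bfAux_zero, mul_one]
      calc γf (m'+1) u ≤ ρ * γf m' u + ch * (q (m'+1) u + ε (m'+1) ^ 2) := hγm
        _ ≤ ρ * (ch * ∑ i ∈ Finset.range m', ε (m' - i) ^ 2 * bfAux ρ (cs*ch) T i u)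
            + ch * ((∑ i ∈ Finset.range m', ε (m' - i) ^ 2 * qfAux ρ (cs*ch) T i u)
              + ε (m'+1) ^ 2) := by
              have h1 := mul_le_mul_of_nonneg_left (ih u hu) hρ0
              have h2 := mul_le_mul_of_nonneg_left
                (add_le_add_right hqm (ε (m'+1) ^ 2)) hch0
              linarith
        _ = ch * (ρ * (∑ i ∈ Finset.range m', ε (m' - i) ^ 2 * bfAux ρ (cs*ch) T i u)
            + (∑ i ∈ Finset.range m', ε (m' - i) ^ 2 * qfAux ρ (cs*ch) T i u)
            + ε (m'+1) ^ 2) := by ring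
        _ = ch * ∑ i ∈ Finset.range (m'+1), ε (m'+1 - i) ^ 2 * bfAux ρ (cs*ch) T i u := by
              rw [hsum]
  have hm1 : (1:ℕ) ≤ m + 1 := by omega
  constructor
  · simp only [show m + 2 - 1 = m + 1 from rfl]
    have hconv : ∑ k ∈ Finset.Icc 1 (m+1), ε (m+2-k) ^ 2 *
        ∑ j ∈ Finset.Icc 1 k, ((k-1).choose (j-1) : ℝ) * ρ^(k-j) * (cs*ch)^(j-1)
          * (T-t)^(j-1) / ((j-1).factorial : ℝ)
        = ∑ i ∈ Finset.range (m+1), ε (m+1-i) ^ 2 * bfAux ρ (cs*ch) T i t := by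
      rw [← Finset.Ico_add_one_right_eq_Icc, Finset.sum_Ico_eq_sum_range]
      refine Finset.sum_congr (by norm_num) fun i hi => ?_
      rw [Icc_sum_bf ρ (cs*ch) T (1+i) (by omega)]
      have h2 : m + 2 - (1+i) = m + 1 - i := by omega
      have h3 : 1 + i - 1 = i := by omega
      rw [h2, h3]
    rw [hconv]
    exact key (m+1) hm1 t ⟨ht0, htT⟩
  · simp only [show m + 2 - 1 = m + 1 from rfl]
    have hconv : ∑ k ∈ Finset.Icc 1 (m+1), ε (m+2-k) ^ 2 *
        ∑ j ∈ Finset.Icc 1 k, ((k-1).choose (j-1) : ℝ) * ρ^(k-j) * (cs*ch)^j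
          * (T-t)^j / (j.factorial : ℝ)
        = ∑ i ∈ Finset.range (m+1), ε (m+1-i) ^ 2 * qfAux ρ (cs*ch) T i t := by
      rw [← Finset.Ico_add_one_right_eq_Icc, Finset.sum_Ico_eq_sum_range]
      refine Finset.sum_congr (by norm_num) fun i hi => ?_
      rw [Icc_sum_qf ρ (cs*ch) T (1+i) (by omega)]
      have h2 : m + 2 - (1+i) = m + 1 - i := by omega
      have h3 : 1 + i - 1 = i := by omega
      rw [h2, h3]
    rw [hconv]
    exact qstep (m+1) hm1 (key (m+1) hm1) t ⟨ht0, htT⟩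


end NLLGame
end
end
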